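/- arXiv:2006.04676 — 2 statements merged into one kernel-verified Lean document; each statement's English description precedes it below -/
import Mathlib

section
/- Let 𝔞 be a Lie subalgebra of the free 2-step nilpotent Lie algebra 𝔤 = 𝕂^r ⊕ Λ²𝕂^r, and suppose the projection of 𝔞 to 𝕂^r has dimension k ≥ 2. Then the Lie subalgebra generated by any linear complement of 𝔞 ∩ Λ²𝕂^r in 𝔞 is isomorphic to the free 2-step nilpotent Lie algebra of rank k. -/
/-- The free 2-step nilpotent Lie algebra of rank `r`: `𝕂^r ⊕ Λ²𝕂^r`, where
`Λ²𝕂^r` is modeled by coordinates indexed by pairs `i < j`. -/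
abbrev FreeNilp2 (K : Type) [Field K] (r : ℕ) : Type :=
  (Fin r → K) × ({p : Fin r × Fin r // p.1 < p.2} → K)

/-- The wedge `x ∧ y` in coordinates. -/
def wedge {K : Type} [Field K] {r : ℕ} (x y : Fin r → K) :
    {p : Fin r × Fin r // p.1 < p.2} → K :=
  fun p => x p.1.1 * y p.1.2 - x p.1.2 * y p.1.1

noncomputable instance (K : Type) [Field K] (r : ℕ) : LieRing (FreeNilp2 K r) where
  bracket a b := (0, wedge a.1 b.1)
  add_lie a b c := by
    refine Prod.ext (by simp) (funext fun p => ?_)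
    show wedge (a.1 + b.1) c.1 p = wedge a.1 c.1 p + wedge b.1 c.1 p
    simp [wedge]; ring
  lie_add a b c := by
    refine Prod.ext (by simp) (funext fun p => ?_)
    show wedge a.1 (b.1 + c.1) p = wedge a.1 b.1 p + wedge a.1 c.1 p
    simp [wedge]; ring
  lie_self a := by
    refine Prod.ext (by simp) (funext fun p => ?_)
    show wedge a.1 a.1 p = 0
    simp [wedge]; ring
  leibniz_lie a b c := by
    refine Prod.ext (by simp) (funext fun p => ?_)
    show wedge a.1 (0 : Fin r → K) p =
      wedge (0 : Fin r → K) c.1 p + wedge b.1 (0 : Fin r → K) p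
    simp [wedge]

noncomputable instance (K : Type) [Field K] (r : ℕ) : LieAlgebra K (FreeNilp2 K r) where
  lie_smul t a b := by
    refine Prod.ext (by show (0 : Fin r → K) = t • (0 : Fin r → K); simp) (funext fun p => ?_)
    show wedge a.1 (t • b.1) p = t * wedge a.1 b.1 p
    simp [wedge]; ring

/-!
Projection to `𝕂^r` maps `W` isomorphically onto the `k`-dimensional space `pr₁ 𝔞`, so a
basis `w₁, …, w_k` of `W` has linearly independent first components `vᵢ`. Since brackets in `𝔤`
are central, `eᵢ ↦ wᵢ`, `eᵢ ∧ eⱼ ↦ ⁅wᵢ, wⱼ⁆` is a Lie morphism from the free 2-step nilpotent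
algebra of rank `k`, with image the Lie span of `W`. It is injective because
`⁅wᵢ, wⱼ⁆ = vᵢ ∧ vⱼ`, and a left inverse `π` of `v` sends these wedges, through `Λ²π`, to the
standard basis of `Λ²𝕂^k`.
-/

open Finset

section Wedge

variable {K : Type} [Field K]

theorem sum_sum_smul_eq_sum_wedge_smul {M : Type*} [AddCommGroup M] [Module K M] {n : ℕ}
    (a b : Fin n → K) (T : Fin n → Fin n → M) (hdiag : ∀ i, T i i = 0)
    (hskew : ∀ i j, T j i = -T i j) :
    ∑ i, ∑ j, (a i * b j) • T i j =
      ∑ p : {p : Fin n × Fin n // p.1 < p.2}, wedge a b p • T p.1.1 p.1.2 := by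
  have hsplit : ∀ i j, (a i * b j) • T i j =
      (if i < j then (a i * b j) • T i j else 0) + (if j < i then (a i * b j) • T i j else 0) := by
    intro i j
    rcases lt_trichotomy i j with h | rfl | h
    · simp [h, h.not_gt]
    · simp [hdiag]
    · simp [h, h.not_gt]
  have hswap : ∑ i, ∑ j, (if j < i then (a i * b j) • T i j else 0) =
      ∑ i, ∑ j, (if i < j then (-(a j * b i)) • T i j else 0) := by
    rw [sum_comm]
    refine sum_congr rfl fun i _ => sum_congr rfl fun j _ => ?_
    split_ifs
    · rw [hskew, smul_neg, neg_smul]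
    · rfl
  calc ∑ i, ∑ j, (a i * b j) • T i j
      = ∑ i, ∑ j, ((if i < j then (a i * b j) • T i j else 0) +
          (if j < i then (a i * b j) • T i j else 0)) :=
        sum_congr rfl fun i _ => sum_congr rfl fun j _ => hsplit i j
    _ = ∑ i, ∑ j, (if i < j then (a i * b j - a j * b i) • T i j else 0) := by
        simp only [sum_add_distrib]
        rw [hswap, ← sum_add_distrib]
        refine sum_congr rfl fun i _ => ?_
        rw [← sum_add_distrib]
        refine sum_congr rfl fun j _ => ?_
        split_ifs
        · module
        · simp
    _ = ∑ p : {p : Fin n × Fin n // p.1 < p.2}, wedge a b p • T p.1.1 p.1.2 := by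
        rw [← Fintype.sum_prod_type', ← sum_filter, sum_subtype _ (fun _ => mem_filter_univ _)]
        rfl

theorem lie_sum_smul_sum_smul {L : Type*} [LieRing L] [LieAlgebra K L] {n : ℕ}
    (w : Fin n → L) (a b : Fin n → K) :
    ⁅∑ i, a i • w i, ∑ j, b j • w j⁆ =
      ∑ p : {p : Fin n × Fin n // p.1 < p.2}, wedge a b p • ⁅w p.1.1, w p.1.2⁆ := by
  rw [← sum_sum_smul_eq_sum_wedge_smul a b (fun i j => ⁅w i, w j⁆) (fun _ => lie_self _)
    (fun _ _ => (lie_skew _ _).symm), sum_lie]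
  simp only [smul_lie, lie_sum, lie_smul, mul_smul]
  exact sum_congr rfl fun i _ => sum_congr rfl fun j _ => smul_comm _ _ _

end Wedge

namespace FreeNilp2

variable {K : Type} [Field K] {r : ℕ}

theorem lie_def (a b : FreeNilp2 K r) : ⁅a, b⁆ = (0, wedge a.1 b.1) := rfl

theorem lie_lie (a b c : FreeNilp2 K r) : ⁅a, ⁅b, c⁆⁆ = 0 :=
  Prod.ext rfl (funext fun _ => by simp [lie_def, wedge])

theorem wedge_sum_smul {n : ℕ} (u : Fin n → Fin r → K) (a b : Fin n → K) :
    wedge (∑ i, a i • u i) (∑ j, b j • u j) =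
      ∑ p : {p : Fin n × Fin n // p.1 < p.2}, wedge a b p • wedge (u p.1.1) (u p.1.2) := by
  have h := congrArg Prod.snd
    (lie_sum_smul_sum_smul (fun i => ((u i, 0) : FreeNilp2 K r)) a b)
  simpa [lie_def, Prod.fst_sum, Prod.snd_sum] using h

theorem wedge_single_single {n : ℕ} (p : {p : Fin n × Fin n // p.1 < p.2}) :
    wedge (Pi.single p.1.1 (1 : K)) (Pi.single p.1.2 1) = Pi.single p 1 := by
  funext q
  obtain ⟨⟨i, j⟩, hij⟩ := p
  obtain ⟨⟨i', j'⟩, hij'⟩ := q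
  simp only [wedge, Pi.single_apply, Subtype.mk.injEq, Prod.mk.injEq]
  split_ifs <;> simp_all
  omega

noncomputable def wedgeMap {m n : ℕ} (π : (Fin m → K) →ₗ[K] (Fin n → K)) :
    ({p : Fin m × Fin m // p.1 < p.2} → K) →ₗ[K] ({p : Fin n × Fin n // p.1 < p.2} → K) :=
  Fintype.linearCombination K fun p =>
    wedge (π (Pi.basisFun K (Fin m) p.1.1)) (π (Pi.basisFun K (Fin m) p.1.2))

theorem wedgeMap_wedge {m n : ℕ} (π : (Fin m → K) →ₗ[K] (Fin n → K)) (x y : Fin m → K) :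
    wedgeMap π (wedge x y) = wedge (π x) (π y) := by
  conv_rhs => rw [← (Pi.basisFun K (Fin m)).sum_repr x, ← (Pi.basisFun K (Fin m)).sum_repr y]
  simp only [map_sum, map_smul, Pi.basisFun_repr]
  rw [wedge_sum_smul, wedgeMap, Fintype.linearCombination_apply]

theorem linearIndependent_wedge {n : ℕ} {v : Fin n → Fin r → K} (hv : LinearIndependent K v) :
    LinearIndependent K fun p : {p : Fin n × Fin n // p.1 < p.2} => wedge (v p.1.1) (v p.1.2) := by
  obtain ⟨π, hπ⟩ := (Fintype.linearCombination K v).exists_leftInverse_of_injective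
    (LinearMap.ker_eq_bot.2 (linearIndependent_iff_injective_fintypeLinearCombination.1 hv))
  have hπv : ∀ i, π (v i) = Pi.single i 1 := fun i => by
    simpa using LinearMap.congr_fun hπ (Pi.single i 1)
  refine LinearIndependent.of_comp (wedgeMap π) ?_
  convert Pi.linearIndependent_single_one {p : Fin n × Fin n // p.1 < p.2} K with p
  simp [wedgeMap_wedge, hπv, wedge_single_single]

variable {L : Type*} [LieRing L] [LieAlgebra K L] {k : ℕ}

noncomputable def lift (hL : ∀ x y z : L, ⁅x, ⁅y, z⁆⁆ = 0) (w : Fin k → L) :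
    FreeNilp2 K k →ₗ⁅K⁆ L :=
  { (Fintype.linearCombination K w).comp (LinearMap.fst K _ _) +
      (Fintype.linearCombination K fun p : {p : Fin k × Fin k // p.1 < p.2} =>
        ⁅w p.1.1, w p.1.2⁆).comp (LinearMap.snd K _ _) with
    map_lie' := by
      intro z z'
      have hcentral : ∀ (x : L) (c : {p : Fin k × Fin k // p.1 < p.2} → K),
          ⁅x, ∑ p, c p • ⁅w p.1.1, w p.1.2⁆⁆ = 0 := by
        simp [lie_sum, lie_smul, hL]
      have hcentral' : ∀ (x : L) (c : {p : Fin k × Fin k // p.1 < p.2} → K),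
          ⁅∑ p, c p • ⁅w p.1.1, w p.1.2⁆, x⁆ = 0 := by
        intro x c
        rw [← lie_skew, hcentral, neg_zero]
      simp only [LinearMap.toFun_eq_coe, LinearMap.add_apply, LinearMap.coe_comp,
        Function.comp_apply, LinearMap.fst_apply, LinearMap.snd_apply,
        Fintype.linearCombination_apply, lie_def]
      rw [add_lie, lie_add, lie_add, hcentral, hcentral', hcentral', lie_sum_smul_sum_smul]
      simp }

theorem lift_apply (hL : ∀ x y z : L, ⁅x, ⁅y, z⁆⁆ = 0) (w : Fin k → L) (z : FreeNilp2 K k) :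
    lift hL w z = ∑ i, z.1 i • w i + ∑ p, z.2 p • ⁅w p.1.1, w p.1.2⁆ :=
  rfl

theorem range_lift (hL : ∀ x y z : L, ⁅x, ⁅y, z⁆⁆ = 0) (w : Fin k → L) :
    (lift hL w).range = LieSubalgebra.lieSpan K L (Set.range w) := by
  apply le_antisymm
  · intro x hx
    obtain ⟨z, rfl⟩ := (LieHom.mem_range _ _).1 hx
    have hw : ∀ i, w i ∈ LieSubalgebra.lieSpan K L (Set.range w) :=
      fun i => LieSubalgebra.subset_lieSpan ⟨i, rfl⟩
    rw [lift_apply]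
    exact add_mem (sum_mem fun i _ => SMulMemClass.smul_mem _ (hw i))
      (sum_mem fun p _ => SMulMemClass.smul_mem _ (LieSubalgebra.lie_mem _ (hw _) (hw _)))
  · rw [LieSubalgebra.lieSpan_le]
    rintro _ ⟨i, rfl⟩
    exact ⟨(Pi.single i 1, 0), by simp [lift_apply]⟩

theorem fst_lift (w : Fin k → FreeNilp2 K r) (z : FreeNilp2 K k) :
    (lift (K := K) lie_lie w z).1 = ∑ i, z.1 i • (w i).1 := by
  rw [lift_apply, Prod.fst_add, Prod.fst_sum, Prod.fst_sum]
  simp [lie_def]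

theorem snd_lift (w : Fin k → FreeNilp2 K r) (z : FreeNilp2 K k) :
    (lift (K := K) lie_lie w z).2 =
      ∑ i, z.1 i • (w i).2 + ∑ p, z.2 p • wedge (w p.1.1).1 (w p.1.2).1 := by
  rw [lift_apply, Prod.snd_add, Prod.snd_sum, Prod.snd_sum]
  rfl

theorem lift_injective {w : Fin k → FreeNilp2 K r} (hw : LinearIndependent K fun i => (w i).1) :
    Function.Injective (lift (K := K) lie_lie w) := by
  refine (injective_iff_map_eq_zero (lift (K := K) lie_lie w)).2 fun z hz => ?_
  have hfst : ∑ i, z.1 i • (w i).1 = 0 := by rw [← fst_lift, hz]; rfl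
  have hz₁ : z.1 = 0 := funext (Fintype.linearIndependent_iff.1 hw _ hfst)
  have hsnd : ∑ p, z.2 p • wedge (w p.1.1).1 (w p.1.2).1 = 0 := by
    simpa [hz₁] using (snd_lift w z).symm.trans (congrArg Prod.snd hz)
  have hwedge := linearIndependent_wedge (v := fun i => (w i).1) hw
  have hz₂ : z.2 = 0 := funext (Fintype.linearIndependent_iff.1 hwedge _ hsnd)
  exact Prod.ext hz₁ hz₂

theorem nonempty_lieSpan_lieEquiv_of_disjoint_ker_fst (W : Submodule K (FreeNilp2 K r))
    (hW : Disjoint W (LinearMap.ker (LinearMap.fst K (Fin r → K) _)))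
    (hk : Module.finrank K (W.map (LinearMap.fst K (Fin r → K) _)) = k) :
    Nonempty (LieSubalgebra.lieSpan K (FreeNilp2 K r) W ≃ₗ⁅K⁆ FreeNilp2 K k) := by
  set F := (LinearMap.fst K (Fin r → K) ({p : Fin r × Fin r // p.1 < p.2} → K)).domRestrict W
  have hF : Function.Injective F := LinearMap.injective_domRestrict_iff.2 hW
  let b := Module.finBasisOfFinrankEq K W
    (by rw [← LinearMap.finrank_range_of_inj hF, LinearMap.range_domRestrict, hk])
  let w : Fin k → FreeNilp2 K r := fun i => b i
  have hv : LinearIndependent K fun i => (w i).1 :=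
    b.linearIndependent.map' F (LinearMap.ker_eq_bot.2 hF)
  have hspan : Submodule.span K (Set.range w) = W := by
    rw [show Set.range w = W.subtype '' Set.range b from Set.range_comp _ _,
      Submodule.span_image, b.span_eq, Submodule.map_subtype_top]
  have hlieSpan : LieSubalgebra.lieSpan K _ (Set.range w) = LieSubalgebra.lieSpan K _ W :=
    le_antisymm (LieSubalgebra.lieSpan_mono (hspan ▸ Submodule.subset_span))
      (LieSubalgebra.lieSpan_le.2 (hspan ▸ LieSubalgebra.submodule_span_le_lieSpan))
  exact ⟨((LieEquiv.ofInjective _ (lift_injective hv)).trans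
    (LieEquiv.ofEq _ _ (by rw [range_lift, hlieSpan]))).symm⟩

end FreeNilp2

theorem subalgebra_complement_free_general (K : Type) [Field K] (r k : ℕ)
    (𝔞 : LieSubalgebra K (FreeNilp2 K r))
    (hproj : Module.finrank K
      (Submodule.map
        (LinearMap.fst K (Fin r → K) ({p : Fin r × Fin r // p.1 < p.2} → K))
        𝔞.toSubmodule) = k)
    (W : Submodule K (FreeNilp2 K r))
    (hdisj : W ⊓ (𝔞.toSubmodule ⊓
      LinearMap.ker (LinearMap.fst K (Fin r → K) ({p : Fin r × Fin r // p.1 < p.2} → K))) = ⊥)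
    (hsup : W ⊔ (𝔞.toSubmodule ⊓
      LinearMap.ker (LinearMap.fst K (Fin r → K) ({p : Fin r × Fin r // p.1 < p.2} → K))) = 𝔞.toSubmodule) :
    Nonempty
      ((LieSubalgebra.lieSpan K (FreeNilp2 K r) (W : Set (FreeNilp2 K r))) ≃ₗ⁅K⁆
        FreeNilp2 K k) := by
  set F := LinearMap.fst K (Fin r → K) ({p : Fin r × Fin r // p.1 < p.2} → K)
  have hW : W ≤ 𝔞.toSubmodule := hsup ▸ le_sup_left
  have hWF : Disjoint W (LinearMap.ker F) := by
    rw [disjoint_iff, ← inf_eq_left.2 hW, inf_assoc, hdisj]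
  have hmap : W.map F = 𝔞.toSubmodule.map F := by
    rw [← hsup, Submodule.map_sup, LinearMap.le_ker_iff_map.1 inf_le_right, sup_bot_eq]
  exact FreeNilp2.nonempty_lieSpan_lieEquiv_of_disjoint_ker_fst W hWF (hmap ▸ hproj)

/-- If `𝔞` is a Lie subalgebra of the free 2-step nilpotent Lie algebra of rank
`r` whose projection to `𝕂^r` has dimension `k ≥ 2`, then the Lie subalgebra
generated by any linear complement `W` of `𝔞 ∩ Λ²𝕂^r` in `𝔞` is isomorphic to
the free 2-step nilpotent Lie algebra of rank `k`. -/
theorem subalgebra_complement_free (K : Type) [Field K] [CharZero K] (r k : ℕ)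
    (hk : 2 ≤ k) (𝔞 : LieSubalgebra K (FreeNilp2 K r))
    (hproj : Module.finrank K
      (Submodule.map
        (LinearMap.fst K (Fin r → K) ({p : Fin r × Fin r // p.1 < p.2} → K))
        𝔞.toSubmodule) = k)
    (W : Submodule K (FreeNilp2 K r)) (hW : W ≤ 𝔞.toSubmodule)
    (hdisj : W ⊓ (𝔞.toSubmodule ⊓
      LinearMap.ker (LinearMap.fst K (Fin r → K) ({p : Fin r × Fin r // p.1 < p.2} → K))) = ⊥)
    (hsup : W ⊔ (𝔞.toSubmodule ⊓
      LinearMap.ker (LinearMap.fst K (Fin r → K) ({p : Fin r × Fin r // p.1 < p.2} → K))) = 𝔞.toSubmodule) :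
    Nonempty
      ((LieSubalgebra.lieSpan K (FreeNilp2 K r) (W : Set (FreeNilp2 K r))) ≃ₗ⁅K⁆
        FreeNilp2 K k) :=
  subalgebra_complement_free_general K r k 𝔞 hproj W hdisj hsup
end

section
/- If π : 𝓛_{r,2} → gl(V) is a faithful representation of type (a,1,b) of the free 2-step nilpotent Lie algebra of rank r, then dim V ≥ 2r - 1. -/
/-- The block index of a basis vector, for block sizes `a, p, b`. -/
def blk {a p b : ℕ} : Fin a ⊕ Fin p ⊕ Fin b → Fin 3
  | Sum.inl _ => 0
  | Sum.inr (Sum.inl _) => 1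
  | Sum.inr (Sum.inr _) => 2

/-- A matrix is strictly block upper triangular (blocks of sizes `a, p, b`) if
its only nonzero entries lie in the blocks `(1,2)`, `(1,3)` and `(2,3)`. -/
def StrictBlockUpper {K : Type} [Field K] {a p b : ℕ}
    (M : Matrix (Fin a ⊕ Fin p ⊕ Fin b) (Fin a ⊕ Fin p ⊕ Fin b) K) : Prop :=
  ∀ i j, ¬ blk i < blk j → M i j = 0

/-
In a strictly block upper triangular representation with block sizes `(a, p, b)`, a product `M N`
only passes through the middle block: `(M N)ᵤᵥ = ∑ₖ Mᵤₖ Nₖᵥ` over middle indices `k`. So two such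
matrices commute as soon as both have vanishing `(1,2)` block, or both have vanishing `(2,3)` block.
Restricted to the degree-one part `𝕂^r`, the `(1,2)` block of `π` is a linear map to `𝕂^a` whose
kernel consists of vectors with commuting images, hence (by faithfulness) with vanishing wedge; such
a space is at most a line, so `r ≤ a + 1`. Likewise `r ≤ b + 1`, and adding gives `2r - 1 ≤ a + 1 + b`.
-/

attribute [local instance 100] LieRing.ofAssociativeRing

open Module

namespace StrictBlockUpper

variable {K : Type} [Field K] {a p b : ℕ}
  {M N : Matrix (Fin a ⊕ Fin p ⊕ Fin b) (Fin a ⊕ Fin p ⊕ Fin b) K}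

theorem mul_apply (hM : StrictBlockUpper M) (hN : StrictBlockUpper N)
    (u v : Fin a ⊕ Fin p ⊕ Fin b) :
    (M * N) u v = ∑ k : Fin p, M u (Sum.inr (Sum.inl k)) * N (Sum.inr (Sum.inl k)) v := by
  have hleft : ∀ k : Fin a, M u (Sum.inl k) * N (Sum.inl k) v = 0 := fun k => by
    rw [hM u (Sum.inl k) (by rcases u with _ | _ | _ <;> simp [blk]), zero_mul]
  have hright : ∀ k : Fin b, M u (Sum.inr (Sum.inr k)) * N (Sum.inr (Sum.inr k)) v = 0 :=
    fun k => by rw [hN _ v (by rcases v with _ | _ | _ <;> simp [blk]), mul_zero]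
  simp [Matrix.mul_apply, Fintype.sum_sum_type, hleft, hright]

theorem mul_eq_zero_of_block₁₂_eq_zero (hM : StrictBlockUpper M) (hN : StrictBlockUpper N)
    (hM₁₂ : ∀ i k, M (Sum.inl i) (Sum.inr (Sum.inl k)) = 0) : M * N = 0 := by
  have hcol : ∀ u k, M u (Sum.inr (Sum.inl k)) = 0 := by
    rintro (i | i | i) k
    · exact hM₁₂ i k
    all_goals exact hM _ _ (by simp [blk])
  ext u v
  simp [hM.mul_apply hN, hcol]

theorem mul_eq_zero_of_block₂₃_eq_zero (hM : StrictBlockUpper M) (hN : StrictBlockUpper N)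
    (hN₂₃ : ∀ k j, N (Sum.inr (Sum.inl k)) (Sum.inr (Sum.inr j)) = 0) : M * N = 0 := by
  have hrow : ∀ k v, N (Sum.inr (Sum.inl k)) v = 0 := by
    rintro k (j | j | j)
    · exact hN _ _ (by simp [blk])
    · exact hN _ _ (by simp [blk])
    · exact hN₂₃ k j
  ext u v
  simp [hM.mul_apply hN, hrow]

theorem lie_eq_zero_of_block₁₂_eq_zero (hM : StrictBlockUpper M) (hN : StrictBlockUpper N)
    (hM₁₂ : ∀ i k, M (Sum.inl i) (Sum.inr (Sum.inl k)) = 0)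
    (hN₁₂ : ∀ i k, N (Sum.inl i) (Sum.inr (Sum.inl k)) = 0) : ⁅M, N⁆ = 0 := by
  rw [Ring.lie_def, hM.mul_eq_zero_of_block₁₂_eq_zero hN hM₁₂,
    hN.mul_eq_zero_of_block₁₂_eq_zero hM hN₁₂, sub_zero]

theorem lie_eq_zero_of_block₂₃_eq_zero (hM : StrictBlockUpper M) (hN : StrictBlockUpper N)
    (hM₂₃ : ∀ k j, M (Sum.inr (Sum.inl k)) (Sum.inr (Sum.inr j)) = 0)
    (hN₂₃ : ∀ k j, N (Sum.inr (Sum.inl k)) (Sum.inr (Sum.inr j)) = 0) : ⁅M, N⁆ = 0 := by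
  rw [Ring.lie_def, hM.mul_eq_zero_of_block₂₃_eq_zero hN hN₂₃,
    hN.mul_eq_zero_of_block₂₃_eq_zero hM hM₂₃, sub_zero]

end StrictBlockUpper

section Wedge

variable {K : Type} [Field K] {r : ℕ}

theorem mul_eq_mul_of_wedge_eq_zero {x y : Fin r → K} (h : wedge x y = 0) (i j : Fin r) :
    x i * y j = x j * y i := by
  rcases lt_trichotomy i j with hij | rfl | hij
  · have hw : x i * y j - x j * y i = 0 := congrFun h ⟨(i, j), hij⟩
    linear_combination hw
  · ring
  · have hw : x j * y i - x i * y j = 0 := congrFun h ⟨(j, i), hij⟩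
    linear_combination -hw

theorem finrank_le_one_of_wedge_eq_zero (S : Submodule K (Fin r → K))
    (hS : ∀ x ∈ S, ∀ y ∈ S, wedge x y = 0) : finrank K S ≤ 1 := by
  by_cases hzero : ∀ x ∈ S, x = 0
  · exact finrank_le_one 0 fun w => ⟨0, Subtype.ext (by simp [hzero w w.2])⟩
  push Not at hzero
  obtain ⟨x, hxS, hx⟩ := hzero
  obtain ⟨i, hi⟩ : ∃ i, x i ≠ 0 := Function.ne_iff.mp hx
  refine finrank_le_one ⟨x, hxS⟩ fun w => ⟨w.1 i / x i, Subtype.ext (funext fun j => ?_)⟩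
  have hij := mul_eq_mul_of_wedge_eq_zero (hS x hxS w w.2) j i
  simp only [SetLike.val_smul, Pi.smul_apply, smul_eq_mul]
  field_simp
  linear_combination hij

theorem le_finrank_add_one_of_ker_wedge_eq_zero {W : Type} [AddCommGroup W] [Module K W]
    [FiniteDimensional K W] (f : (Fin r → K) →ₗ[K] W)
    (hf : ∀ x ∈ LinearMap.ker f, ∀ y ∈ LinearMap.ker f, wedge x y = 0) :
    r ≤ finrank K W + 1 := by
  have hrank := LinearMap.finrank_range_add_finrank_ker f
  rw [finrank_fin_fun] at hrank
  have := Submodule.finrank_le (LinearMap.range f)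
  have := finrank_le_one_of_wedge_eq_zero _ hf
  omega

theorem wedge_eq_zero_of_lie_eq_zero {L : Type} [LieRing L] [LieAlgebra K L]
    (π : FreeNilp2 K r →ₗ⁅K⁆ L) (hπ : Function.Injective π) {X Y : FreeNilp2 K r}
    (h : ⁅π X, π Y⁆ = 0) : wedge X.1 Y.1 = 0 := by
  have hXY : ⁅X, Y⁆ = 0 := hπ (by rw [LieHom.map_lie, h, map_zero])
  exact congrArg Prod.snd hXY

end Wedge

theorem type_a1b_dim_bound_general (K : Type) [Field K] (r a b : ℕ)
    (π : FreeNilp2 K r →ₗ⁅K⁆ Matrix (Fin a ⊕ Fin 1 ⊕ Fin b) (Fin a ⊕ Fin 1 ⊕ Fin b) K)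
    (hinj : Function.Injective π)
    (hblock : ∀ X : FreeNilp2 K r, StrictBlockUpper (π X)) :
    2 * r - 1 ≤ a + 1 + b := by
  let ι := LinearMap.inl K (Fin r → K) ({p : Fin r × Fin r // p.1 < p.2} → K)
  have hbound : ∀ {W : Type} [AddCommGroup W] [Module K W] [FiniteDimensional K W]
      (f : Matrix (Fin a ⊕ Fin 1 ⊕ Fin b) (Fin a ⊕ Fin 1 ⊕ Fin b) K →ₗ[K] W),
      (∀ M N, StrictBlockUpper M → StrictBlockUpper N → f M = 0 → f N = 0 → ⁅M, N⁆ = 0) →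
      r ≤ finrank K W + 1 := fun f hf =>
    le_finrank_add_one_of_ker_wedge_eq_zero (f ∘ₗ π.toLinearMap ∘ₗ ι) fun _ hx _ hy =>
      wedge_eq_zero_of_lie_eq_zero π hinj (hf _ _ (hblock _) (hblock _) hx hy)
  have ha : r ≤ a + 1 := by
    simpa using hbound (LinearMap.pi fun ik : Fin a × Fin 1 =>
        Matrix.entryLinearMap K K (Sum.inl ik.1) (Sum.inr (Sum.inl ik.2)))
      fun M N hM hN hfM hfN => hM.lie_eq_zero_of_block₁₂_eq_zero hN
        (fun i k => congrFun hfM (i, k)) (fun i k => congrFun hfN (i, k))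
  have hb : r ≤ b + 1 := by
    simpa using hbound (LinearMap.pi fun kj : Fin 1 × Fin b =>
        Matrix.entryLinearMap K K (Sum.inr (Sum.inl kj.1)) (Sum.inr (Sum.inr kj.2)))
      fun M N hM hN hfM hfN => hM.lie_eq_zero_of_block₂₃_eq_zero hN
        (fun k j => congrFun hfM (k, j)) (fun k j => congrFun hfN (k, j))
  omega

/-- A faithful representation of type `(a, 1, b)` of the free 2-step nilpotent
Lie algebra of rank `r` has dimension at least `2r - 1`. -/
theorem type_a1b_dim_bound (K : Type) [Field K] [CharZero K] (r a b : ℕ)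
    (π : FreeNilp2 K r →ₗ⁅K⁆ Matrix (Fin a ⊕ Fin 1 ⊕ Fin b) (Fin a ⊕ Fin 1 ⊕ Fin b) K)
    (hinj : Function.Injective π)
    (hblock : ∀ X : FreeNilp2 K r, StrictBlockUpper (π X)) :
    2 * r - 1 ≤ a + 1 + b :=
  type_a1b_dim_bound_general K r a b π hinj hblock
end
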